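/- arXiv:math/0701072 — 7 statements merged into one kernel-verified Lean document; each statement's English description precedes it below -/
import Mathlib

section
/- Let E₁, E₂, F be locally convex topological vector spaces over ℝ, let β : E₁ × E₂ → F be a separately continuous bilinear map, and let 𝔖 be a set of von Neumann bounded subsets of E₂ such that for each M ∈ 𝔖 there exists N ∈ 𝔖 with {c • y : c ∈ ℝ, |c| ≤ 1, y ∈ M} ⊆ N. If for each M ∈ 𝔖 the restriction β|_{E₁ × M} : E₁ × M → F is continuous, then for each M ∈ 𝔖 and each 0-neighbourhood W ⊆ F there exists a 0-neighbourhood V ⊆ E₁ such that β(V × M) ⊆ W. -/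
open Filter Topology Bornology Pointwise

/-- Let `β : E₁ × E₂ → F` be a separately continuous bilinear map between
locally convex spaces over `ℝ` and `𝔖` a set of von Neumann bounded subsets of `E₂` such that
for each `M ∈ 𝔖` there is `N ∈ 𝔖` containing `{c • y : |c| ≤ 1, y ∈ M}`.  If each restriction
`β|_{E₁ × M}` (`M ∈ 𝔖`) is continuous, then for each `M ∈ 𝔖` and `0`-neighbourhood `W ⊆ F`
there is a `0`-neighbourhood `V ⊆ E₁` with `β (V × M) ⊆ W`. -/
theorem statement2
    {E₁ E₂ F : Type*}
    [AddCommGroup E₁] [Module ℝ E₁] [TopologicalSpace E₁] [IsTopologicalAddGroup E₁]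
    [ContinuousSMul ℝ E₁] [LocallyConvexSpace ℝ E₁]
    [AddCommGroup E₂] [Module ℝ E₂] [TopologicalSpace E₂] [IsTopologicalAddGroup E₂]
    [ContinuousSMul ℝ E₂] [LocallyConvexSpace ℝ E₂]
    [AddCommGroup F] [Module ℝ F] [TopologicalSpace F] [IsTopologicalAddGroup F]
    [ContinuousSMul ℝ F] [LocallyConvexSpace ℝ F]
    (𝔖 : Set (Set E₂)) (h𝔖 : ∀ M ∈ 𝔖, IsVonNBounded ℝ M)
    (h𝔖bal : ∀ M ∈ 𝔖, ∃ N ∈ 𝔖, ∀ (c : ℝ), |c| ≤ 1 → ∀ y ∈ M, c • y ∈ N)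
    (β : E₁ × E₂ → F)
    (hlin₁ : ∀ y, IsLinearMap ℝ fun x => β (x, y))
    (hlin₂ : ∀ x, IsLinearMap ℝ fun y => β (x, y))
    (hcont₁ : ∀ y, Continuous fun x => β (x, y))
    (hcont₂ : ∀ x, Continuous fun y => β (x, y))
    (hc : ∀ M ∈ 𝔖, Continuous fun p : E₁ × M => β (p.1, (p.2 : E₂))) :
    ∀ M ∈ 𝔖, ∀ W ∈ 𝓝 (0 : F), ∃ V ∈ 𝓝 (0 : E₁), ∀ x ∈ V, ∀ y ∈ M, β (x, y) ∈ W := by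

  intro M hM W hW
  rcases M.eq_empty_or_nonempty with rfl | ⟨y₀, hy₀⟩
  · exact ⟨Set.univ, Filter.univ_mem, fun x _ y hy => hy.elim⟩
  obtain ⟨N, hN, hNbal⟩ := h𝔖bal M hM
  have h0N : (0 : E₂) ∈ N := by
    simpa using hNbal 0 (by norm_num) y₀ hy₀
  -- continuity of the restriction at (0, 0)
  have hβ00 : β (0, 0) = 0 := (hlin₁ 0).map_zero
  have hcont := hc N hN
  have hca : ContinuousAt (fun p : E₁ × N => β (p.1, (p.2 : E₂))) (0, ⟨0, h0N⟩) :=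
    hcont.continuousAt
  have hpre : (fun p : E₁ × N => β (p.1, (p.2 : E₂))) ⁻¹' W ∈ 𝓝 ((0 : E₁), (⟨0, h0N⟩ : N)) := by
    apply hca
    show W ∈ 𝓝 (β ((0:E₁), ((⟨0, h0N⟩ : N) : E₂)))
    rw [show ((⟨0, h0N⟩ : N) : E₂) = 0 from rfl, hβ00]
    exact hW
  rw [mem_nhds_prod_iff] at hpre
  obtain ⟨V, hV, T, hT, hVT⟩ := hpre
  rw [mem_nhds_subtype] at hT
  obtain ⟨U, hU, hUT⟩ := hT
  -- absorb M into U
  obtain ⟨r, hr, habs⟩ := (h𝔖 M hM hU).exists_pos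
  set a : ℝ := max r 1 with ha
  have ha0 : (0 : ℝ) < a := lt_of_lt_of_le one_pos (le_max_right _ _)
  have haM : M ⊆ a • U := habs a (by rw [Real.norm_eq_abs, abs_of_pos ha0]; exact le_max_left _ _)
  refine ⟨a⁻¹ • V, ?_, ?_⟩
  · exact (set_smul_mem_nhds_zero_iff (inv_ne_zero (ne_of_gt ha0))).mpr
      hV
  · intro x hx y hy
    obtain ⟨v, hv, rfl⟩ := hx
    have hyU : a⁻¹ • y ∈ U := by
      obtain ⟨u, hu, rfl⟩ := haM hy
      rwa [smul_smul, inv_mul_cancel₀ (ne_of_gt ha0), one_smul]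
    have hyN : a⁻¹ • y ∈ N := by
      apply hNbal _ _ _ hy
      rw [abs_of_pos (inv_pos.mpr ha0)]
      exact inv_le_one_of_one_le₀ (le_max_right _ _)
    have key : β (v, a⁻¹ • y) ∈ W :=
      hVT (show ((v, ⟨a⁻¹ • y, hyN⟩) : E₁ × N) ∈ V ×ˢ T from ⟨hv, hUT hyU⟩)
    have : β (v, a⁻¹ • y) = β (a⁻¹ • v, y) := by
      rw [(hlin₂ v).map_smul, ← (hlin₁ y).map_smul]
    rwa [this] at key
end

section
/- Let E, F be locally convex topological vector spaces over ℝ with E barrelled. Let 𝒪 be any topological vector space topology on the space L(E,F) of continuous linear maps from E to F which is finer than the topology of pointwise convergence, and let 𝒯 be any set of subsets of L(E,F) that are von Neumann bounded with respect to 𝒪. Then the evaluation map ε : (L(E,F),𝒪) × E → F, ε(A,x) := A(x), is separately continuous and hypocontinuous in the first argument with respect to 𝒯: for each T ∈ 𝒯 and each 0-neighbourhood W ⊆ F there exists a 0-neighbourhood V ⊆ E such that A(x) ∈ W for all A ∈ T and x ∈ V. -/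
open Filter Topology Bornology

/-- Let `E`, `F` be locally convex spaces over `ℝ` with `E` barrelled.
Let `𝒪` be a vector topology on `L(E,F)` finer than the topology of pointwise convergence
(i.e. all point evaluations are `𝒪`-continuous) and `𝒯` a set of `𝒪`-von Neumann bounded
subsets of `L(E,F)`.  Then the evaluation map `ε : (L(E,F),𝒪) × E → F` is separately
continuous and hypocontinuous in the first argument with respect to `𝒯`. -/
theorem statement8
    {E F : Type*}
    [AddCommGroup E] [Module ℝ E] [TopologicalSpace E] [IsTopologicalAddGroup E]
    [ContinuousSMul ℝ E] [LocallyConvexSpace ℝ E]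
    [AddCommGroup F] [Module ℝ F] [TopologicalSpace F] [IsTopologicalAddGroup F]
    [ContinuousSMul ℝ F] [LocallyConvexSpace ℝ F]
    (hbarrelled : ∀ s : Set E, IsClosed s → Convex ℝ s → Balanced ℝ s → Absorbent ℝ s →
      s ∈ 𝓝 (0 : E))
    (𝒪 : TopologicalSpace (E →L[ℝ] F))
    (h𝒪grp : @IsTopologicalAddGroup (E →L[ℝ] F) 𝒪 _)
    (h𝒪smul : @ContinuousSMul ℝ (E →L[ℝ] F) _ _ 𝒪)
    (h𝒪finer : ∀ x : E, @Continuous _ _ 𝒪 _ fun A : E →L[ℝ] F => A x)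
    (𝒯 : Set (Set (E →L[ℝ] F)))
    (h𝒯 : ∀ T ∈ 𝒯, @IsVonNBounded ℝ (E →L[ℝ] F) _ _ _ 𝒪 T) :
    ((∀ A : E →L[ℝ] F, Continuous fun x : E => A x) ∧
      (∀ x : E, @Continuous _ _ 𝒪 _ fun A : E →L[ℝ] F => A x)) ∧
      ∀ T ∈ 𝒯, ∀ W ∈ 𝓝 (0 : F), ∃ V ∈ 𝓝 (0 : E), ∀ A ∈ T, ∀ x ∈ V, A x ∈ W := by
  refine ⟨⟨fun A => A.continuous, h𝒪finer⟩, fun T hT W hW => ?_⟩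
  -- choose a closed, convex, balanced neighbourhood `C` of `0` in `F` inside `W`
  obtain ⟨C₀, ⟨hC₀, hC₀closed⟩, hC₀W⟩ := (closed_nhds_basis (0 : F)).mem_iff.mp hW
  obtain ⟨U, ⟨hU, hUbal, hUconv⟩, hUC⟩ := (nhds_hasBasis_absConvex ℝ F).mem_iff.mp hC₀
  set C : Set F := closure U with hC
  have hCnhds : C ∈ 𝓝 (0 : F) := mem_of_superset hU subset_closure
  have hCclosed : IsClosed C := isClosed_closure
  have hCconv : Convex ℝ C := hUconv.closure
  have hCbal : Balanced ℝ C := hUbal.closure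
  have hCW : C ⊆ W := (closure_minimal hUC hC₀closed).trans hC₀W
  -- the barrel
  set V : Set E := ⋂ A ∈ T, A ⁻¹' C with hVdef
  have hmemV : ∀ x : E, x ∈ V ↔ ∀ A ∈ T, A x ∈ C := fun x => Set.mem_iInter₂
  have hVclosed : IsClosed V := isClosed_biInter fun A _ => hCclosed.preimage A.continuous
  have hVconv : Convex ℝ V := convex_iInter₂ fun A _ => hCconv.linear_preimage A.toLinearMap
  have hVbal : Balanced ℝ V := by
    intro a ha x hx
    obtain ⟨y, hy, rfl⟩ := hx
    rw [hmemV] at hy ⊢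
    intro A hA
    rw [map_smul]
    exact hCbal a ha ⟨A y, hy A hA, rfl⟩
  have hVabs : Absorbent ℝ V := by
    intro x
    -- the preimage of `C` under evaluation at `x` is an `𝒪`-neighbourhood of `0`
    have hS : (fun A : E →L[ℝ] F => A x) ⁻¹' C ∈ @nhds _ 𝒪 0 := by
      exact (h𝒪finer x).continuousAt.preimage_mem_nhds
        (show C ∈ 𝓝 ((0 : E →L[ℝ] F) x) by simpa using hCnhds)
    have habs : Absorbs ℝ ((fun A : E →L[ℝ] F => A x) ⁻¹' C) T := h𝒯 T hT hS
    refine (habs.and (eventually_ne_cobounded 0)).mono ?_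
    rintro a ⟨hTa, ha0⟩ y hy
    rw [Set.mem_singleton_iff] at hy
    rw [hy]
    rw [Set.mem_smul_set_iff_inv_smul_mem₀ ha0, hmemV]
    intro A hA
    obtain ⟨B, hB, rfl⟩ := hTa hA
    have : (a⁻¹ • (a • B)) x ∈ C := by
      rw [inv_smul_smul₀ ha0]; exact hB
    simpa using this
  exact ⟨V, hbarrelled V hVclosed hVconv hVbal hVabs,
    fun A hA x hx => hCW ((hmemV x).mp hx A hA)⟩
end

section
/- Let X be a Hausdorff compactly generated topological space (a k-space), let E₁, E₂, F be locally convex topological vector spaces over ℝ, let 𝔖 be a set of von Neumann bounded subsets of E₂ which contains all compact subsets of E₂, and let β : E₁ × E₂ → F be a bilinear map that is 𝔖-hypocontinuous in the second argument. Then for every continuous map f : X → E₁ × E₂, the composition β ∘ f : X → F is continuous. -/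
open Filter Topology Bornology

/-- Let `X` be a Hausdorff k-space (a set is closed as soon as its trace on
every compact subset is closed), `E₁`, `E₂`, `F` locally convex spaces over `ℝ`, `𝔖` a set of
von Neumann bounded subsets of `E₂` containing all compact subsets of `E₂`, and
`β : E₁ × E₂ → F` a bilinear map which is `𝔖`-hypocontinuous in the second argument.  Then
`β ∘ f : X → F` is continuous for every continuous `f : X → E₁ × E₂`. -/
theorem statement10
    {X E₁ E₂ F : Type*} [TopologicalSpace X] [T2Space X]
    (hkspace : ∀ s : Set X,
      (∀ K : Set X, IsCompact K → IsClosed ((fun x : K => (x : X)) ⁻¹' s)) → IsClosed s)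
    [AddCommGroup E₁] [Module ℝ E₁] [TopologicalSpace E₁] [IsTopologicalAddGroup E₁]
    [ContinuousSMul ℝ E₁] [LocallyConvexSpace ℝ E₁]
    [AddCommGroup E₂] [Module ℝ E₂] [TopologicalSpace E₂] [IsTopologicalAddGroup E₂]
    [ContinuousSMul ℝ E₂] [LocallyConvexSpace ℝ E₂]
    [AddCommGroup F] [Module ℝ F] [TopologicalSpace F] [IsTopologicalAddGroup F]
    [ContinuousSMul ℝ F] [LocallyConvexSpace ℝ F]
    (𝔖 : Set (Set E₂)) (h𝔖 : ∀ M ∈ 𝔖, IsVonNBounded ℝ M)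
    (h𝔖c : ∀ K : Set E₂, IsCompact K → K ∈ 𝔖)
    (β : E₁ × E₂ → F)
    (hlin₁ : ∀ y, IsLinearMap ℝ fun x => β (x, y))
    (hlin₂ : ∀ x, IsLinearMap ℝ fun y => β (x, y))
    (hcont₁ : ∀ y, Continuous fun x => β (x, y))
    (hcont₂ : ∀ x, Continuous fun y => β (x, y))
    (hhypo : ∀ M ∈ 𝔖, ∀ W ∈ 𝓝 (0 : F), ∃ V ∈ 𝓝 (0 : E₁), ∀ x ∈ V, ∀ y ∈ M, β (x, y) ∈ W)
    (f : X → E₁ × E₂) (hf : Continuous f) :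
    Continuous (β ∘ f) := by
  rw [continuous_iff_isClosed]
  intro C hC
  apply hkspace
  intro K hK
  suffices hcK : Continuous fun k : K => β (f ↑k) by
    exact hC.preimage hcK
  have hM : IsCompact (Prod.snd '' (f '' K)) := (hK.image hf).image continuous_snd
  set M := Prod.snd '' (f '' K) with hMdef
  have hM𝔖 : M ∈ 𝔖 := h𝔖c M hM
  rw [continuous_iff_continuousAt]
  intro a
  set x₀ := (f ↑a).1 with hx₀
  have key : ∀ k : K, β (f ↑k) =
      β ((f ↑k).1 - x₀, (f ↑k).2) + β (x₀, (f ↑k).2) := by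
    intro k
    have h1 := (hlin₁ (f ↑k).2).map_add ((f ↑k).1 - x₀) x₀
    rw [sub_add_cancel] at h1
    simpa using h1
  have h2 : ContinuousAt (fun k : K => β (x₀, (f ↑k).2)) a :=
    ((hcont₂ x₀).comp (continuous_snd.comp (hf.comp continuous_subtype_val))).continuousAt
  have hx : Tendsto (fun k : K => (f ↑k).1 - x₀) (𝓝 a) (𝓝 0) := by
    have hc : Continuous (fun k : K => (f ↑k).1 - x₀) :=
      (continuous_fst.comp (hf.comp continuous_subtype_val)).sub continuous_const
    simpa [hx₀] using hc.tendsto a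
  have h1 : Tendsto (fun k : K => β ((f ↑k).1 - x₀, (f ↑k).2)) (𝓝 a) (𝓝 0) := by
    intro W hW
    obtain ⟨V, hV, hVW⟩ := hhypo M hM𝔖 W hW
    have := hx hV
    rw [mem_map] at this ⊢
    filter_upwards [this] with k hk
    exact hVW _ hk _ ⟨f ↑k, ⟨↑k, k.2, rfl⟩, rfl⟩
  have hsum : Tendsto (fun k : K => β ((f ↑k).1 - x₀, (f ↑k).2) + β (x₀, (f ↑k).2))
      (𝓝 a) (𝓝 (0 + β (x₀, (f ↑a).2))) := h1.add h2
  have heq : (fun k : K => β (f ↑k)) =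
      fun k : K => β ((f ↑k).1 - x₀, (f ↑k).2) + β (x₀, (f ↑k).2) := funext key
  have hval : (0 : F) + β (x₀, (f ↑a).2) = β (f ↑a) := by
    rw [zero_add, hx₀]
  have : Tendsto (fun k : K => β (f ↑k)) (𝓝 a) (𝓝 (β (f ↑a))) := by
    rw [heq, ← hval]; exact hsum
  exact this
end

section
/- Let X, E, F, G be Fréchet spaces over ℝ (complete metrizable locally convex topological vector spaces), let U ⊆ X be an open subset, and let f : U → L(E,F)_b and g : U → L(F,G)_b be continuous maps, where L(·,·)_b denotes the space of continuous linear operators with the topology of uniform convergence on von Neumann bounded sets. Then the map U → L(E,G)_b, x ↦ g(x) ∘ f(x), is continuous. -/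
open Filter Topology Bornology
open scoped Uniformity

/-- A uniformly equicontinuous family of continuous linear maps sends a von Neumann bounded
set to a von Neumann bounded union of images. -/
lemma aux_equicont_image_bounded {ι E F : Type*}
    [AddCommGroup E] [Module ℝ E] [UniformSpace E] [IsUniformAddGroup E] [ContinuousSMul ℝ E]
    [AddCommGroup F] [Module ℝ F] [UniformSpace F] [IsUniformAddGroup F]
    (𝓕 : ι → E →L[ℝ] F) (hequi : UniformEquicontinuous (fun i => (𝓕 i : E → F)))
    {S : Set E} (hS : IsVonNBounded ℝ S) :
    IsVonNBounded ℝ (⋃ i, 𝓕 i '' S) := by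
  intro V hV
  have hW : (fun p : F × F => p.2 - p.1) ⁻¹' V ∈ 𝓤 F := by
    rw [uniformity_eq_comap_nhds_zero F]
    exact Filter.preimage_mem_comap hV
  have h0 : EquicontinuousAt (fun i => (𝓕 i : E → F)) 0 := hequi.equicontinuous 0
  have hT := h0 _ hW
  -- hT : ∀ᶠ x in 𝓝 0, ∀ i, (𝓕 i 0, 𝓕 i x) ∈ _
  have hT' : ∀ᶠ x in 𝓝 (0 : E), ∀ i, 𝓕 i x ∈ V := by
    filter_upwards [hT] with x hx i
    have := hx i
    simpa using this
  obtain ⟨T, hTmem, hTsub⟩ := Filter.eventually_iff_exists_mem.mp hT'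
  have habs := hS hTmem
  filter_upwards [habs] with c hc
  rintro y hy
  simp only [Set.mem_iUnion] at hy
  obtain ⟨i, x, hxS, rfl⟩ := hy
  obtain ⟨t, htT, rfl⟩ := hc hxS
  rw [map_smul]
  exact Set.smul_mem_smul_set (hTsub t htT i)


/-- (Lang's problem.)  Let `X`, `E`, `F`, `G` be Fréchet spaces over `ℝ`
(complete metrizable locally convex spaces), `U ⊆ X` an open subset, and
`f : U → L(E,F)_b`, `g : U → L(F,G)_b` continuous maps into the spaces of continuous linear
operators with the topology of uniform convergence on von Neumann bounded sets (the strong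
topology, which is the default topology on `E →L[ℝ] F` in Mathlib).  Then
`U → L(E,G)_b`, `x ↦ g x ∘ f x`, is continuous. -/
theorem statement11
    {X E F G : Type*}
    [AddCommGroup X] [Module ℝ X] [UniformSpace X] [IsUniformAddGroup X]
    [ContinuousSMul ℝ X] [LocallyConvexSpace ℝ X]
    [TopologicalSpace.MetrizableSpace X] [CompleteSpace X]
    [AddCommGroup E] [Module ℝ E] [UniformSpace E] [IsUniformAddGroup E]
    [ContinuousSMul ℝ E] [LocallyConvexSpace ℝ E]
    [TopologicalSpace.MetrizableSpace E] [CompleteSpace E]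
    [AddCommGroup F] [Module ℝ F] [UniformSpace F] [IsUniformAddGroup F]
    [ContinuousSMul ℝ F] [LocallyConvexSpace ℝ F]
    [TopologicalSpace.MetrizableSpace F] [CompleteSpace F]
    [AddCommGroup G] [Module ℝ G] [UniformSpace G] [IsUniformAddGroup G]
    [ContinuousSMul ℝ G] [LocallyConvexSpace ℝ G]
    [TopologicalSpace.MetrizableSpace G] [CompleteSpace G]
    (U : Set X) (hU : IsOpen U)
    (f : U → E →L[ℝ] F) (hf : Continuous f)
    (g : U → F →L[ℝ] G) (hg : Continuous g) :
    Continuous fun x : U => (g x).comp (f x) := by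
  -- `E` is barrelled (Fréchet ⇒ Baire ⇒ barrelled).
  haveI : (𝓤 E).IsCountablyGenerated := by
    rw [uniformity_eq_comap_nhds_zero E]
    infer_instance
  haveI : BaireSpace E := BaireSpace.of_completelyPseudoMetrizable
  haveI : BarrelledSpace ℝ E := inferInstance
  -- `U` is metrizable, hence sequential: it suffices to prove sequential continuity.
  apply SeqContinuous.continuous
  intro u x₀ hu
  -- seminorms on `F`
  have hqF : WithSeminorms (gaugeSeminormFamily ℝ F) := with_gaugeSeminormFamily
  have hfu : Filter.Tendsto (fun n => f (u n)) atTop (𝓝 (f x₀)) :=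
    (hf.tendsto x₀).comp hu
  have hgu : Filter.Tendsto (fun n => g (u n)) atTop (𝓝 (g x₀)) :=
    (hg.tendsto x₀).comp hu
  -- the family consisting of all `f (u n)` together with `f x₀`
  set 𝓕 : Option ℕ → E →L[ℝ] F := fun o => o.elim (f x₀) (fun n => f (u n)) with h𝓕
  -- convergence in the strong topology is uniform convergence on bounded sets
  have key : ∀ {a : ℕ → E →L[ℝ] F} {a₀ : E →L[ℝ] F},
      Filter.Tendsto a atTop (𝓝 a₀) ↔
        ∀ s, IsVonNBounded ℝ s → TendstoUniformlyOn (fun n x => a n x) (a₀ : E → F) atTop s := by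
    intro a a₀
    exact UniformConvergenceCLM.tendsto_iff_tendstoUniformlyOn
      (σ := RingHom.id ℝ) (F := F) {s : Set E | IsVonNBounded ℝ s}
  have keyEG : ∀ {a : ℕ → E →L[ℝ] G} {a₀ : E →L[ℝ] G},
      Filter.Tendsto a atTop (𝓝 a₀) ↔
        ∀ s, IsVonNBounded ℝ s → TendstoUniformlyOn (fun n x => a n x) (a₀ : E → G) atTop s := by
    intro a a₀
    exact UniformConvergenceCLM.tendsto_iff_tendstoUniformlyOn
      (σ := RingHom.id ℝ) (F := G) {s : Set E | IsVonNBounded ℝ s}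
  have keyG : ∀ {a : ℕ → F →L[ℝ] G} {a₀ : F →L[ℝ] G},
      Filter.Tendsto a atTop (𝓝 a₀) ↔
        ∀ s, IsVonNBounded ℝ s → TendstoUniformlyOn (fun n x => a n x) (a₀ : F → G) atTop s := by
    intro a a₀
    exact UniformConvergenceCLM.tendsto_iff_tendstoUniformlyOn
      (σ := RingHom.id ℝ) (F := G) {s : Set F | IsVonNBounded ℝ s}
  refine keyEG.mpr fun S hS => ?_
  have hfS : TendstoUniformlyOn (fun n x => f (u n) x) (f x₀) atTop S := key.mp hfu S hS
  -- pointwise boundedness of the family `𝓕`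
  have Hbdd : ∀ k e, BddAbove (Set.range fun o => gaugeSeminormFamily ℝ F k (𝓕 o e)) := by
    intro k e
    have hfe : Filter.Tendsto (fun n => f (u n) e) atTop (𝓝 (f x₀ e)) :=
      ((key.mp hfu) {e} (Bornology.isVonNBounded_singleton e)).tendsto_at rfl
    have hconv : Filter.Tendsto (fun n => gaugeSeminormFamily ℝ F k (f (u n) e)) atTop
        (𝓝 (gaugeSeminormFamily ℝ F k (f x₀ e))) :=
      ((hqF.continuous_seminorm k).tendsto _).comp hfe
    have h1 : BddAbove (Set.range fun n => gaugeSeminormFamily ℝ F k (f (u n) e)) :=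
      hconv.bddAbove_range
    have : (Set.range fun o => gaugeSeminormFamily ℝ F k (𝓕 o e)) =
        insert (gaugeSeminormFamily ℝ F k (f x₀ e))
          (Set.range fun n => gaugeSeminormFamily ℝ F k (f (u n) e)) :=
      Option.range_eq _
    rw [this]
    exact h1.insert _
  -- the family `𝓕` is uniformly equicontinuous by Banach–Steinhaus
  have hequi : UniformEquicontinuous (fun o => (𝓕 o : E → F)) :=
    hqF.banach_steinhaus Hbdd
  -- hence the union of images of `S` is bounded in `F`
  set T : Set F := ⋃ o, 𝓕 o '' S with hT
  have hTb : IsVonNBounded ℝ T := aux_equicont_image_bounded 𝓕 hequi hS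
  have hgT : TendstoUniformlyOn (fun n y => g (u n) y) (g x₀) atTop T := keyG.mp hgu T hTb
  -- uniform convergence of `g x₀ ∘ f (u n)` on `S`
  have hgf : TendstoUniformlyOn (fun n x => g x₀ (f (u n) x)) (fun x => g x₀ (f x₀ x)) atTop S :=
    (g x₀).uniformContinuous.comp_tendstoUniformlyOn hfS
  -- put things together
  intro V hV
  obtain ⟨W, hW, hWW⟩ := comp_mem_uniformity_sets hV
  filter_upwards [hgf W hW, hgT W hW] with n h1 h2 e he
  refine hWW ⟨g x₀ (f (u n) e), h1 e he, ?_⟩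
  exact h2 _ (Set.mem_iUnion.mpr ⟨some n, Set.mem_image_of_mem _ he⟩)
end

section
/- Let U be an open subset of a Hausdorff locally convex topological vector space over ℝ, let F₁, F₂, G be Hausdorff locally convex topological vector spaces over ℝ, and let β : F₁ × F₂ → G be a bilinear map that is hypocontinuous in the second argument with respect to the set of all compact subsets of F₂. Equip C(U,F₁), C(U,F₂), C(U,G) with the compact-open topology. Then the bilinear map C(U,β) : C(U,F₁) × C(U,F₂) → C(U,G), (f,g) ↦ (x ↦ β(f(x),g(x))), is hypocontinuous with respect to compact subsets of C(U,F₂): it is separately continuous in the first argument, and for each compact set M ⊆ C(U,F₂), each compact K ⊆ U and each 0-neighbourhood W ⊆ G, there exists a 0-neighbourhood V ⊆ F₁ such that β(f(x), g(x)) ∈ W for all f ∈ C(U,F₁) with f(K) ⊆ V, all g ∈ M and all x ∈ K. -/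
open Filter Topology Bornology

/-- A compact family `M ⊆ C(U,F₂)` maps a compact `K ⊆ U` into a compact subset of `F₂`. -/
theorem statement16_aux {E F₂ : Type*} [TopologicalSpace E] [T2Space E] [TopologicalSpace F₂]
    (U : Set E) (K : Set U) (hK : IsCompact K) (M : Set C(U, F₂)) (hM : IsCompact M) :
    ∃ N : Set F₂, IsCompact N ∧ ∀ g ∈ M, ∀ x ∈ K, g x ∈ N := by
  haveI : CompactSpace ↥K := isCompact_iff_compactSpace.mp hK
  let incl : C(↥K, ↥U) := ⟨Subtype.val, continuous_subtype_val⟩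
  let ρ : C(↥U, F₂) → C(↥K, F₂) := fun g => g.comp incl
  refine ⟨(fun p : C(↥K, F₂) × ↥K => p.1 p.2) '' ((ρ '' M) ×ˢ Set.univ), ?_, ?_⟩
  · exact ((hM.image (ContinuousMap.continuous_precomp incl)).prod isCompact_univ).image
      continuous_eval
  · intro g hg x hx
    exact ⟨(ρ g, ⟨x, hx⟩), ⟨⟨g, hg, rfl⟩, Set.mem_univ _⟩, rfl⟩

/-- Let `U` be an open subset of a Hausdorff locally convex space `E` over
`ℝ`, let `F₁`, `F₂`, `G` be Hausdorff locally convex spaces over `ℝ`, and let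
`β : F₁ × F₂ → G` be bilinear and hypocontinuous in the second argument with respect to the
compact subsets of `F₂`.  Equip `C(U,F₁)`, `C(U,F₂)`, `C(U,G)` with the compact-open topology.
Then `C(U,β) : (f,g) ↦ (x ↦ β (f x, g x))` is hypocontinuous with respect to the compact
subsets of `C(U,F₂)`: it is continuous in the first argument for each fixed `g` (stated for
any map `Φ : C(U,F₁) → C(U,G)` realizing `f ↦ β ∘ (f, g)`), and for each compact
`M ⊆ C(U,F₂)`, each compact `K ⊆ U` and each `0`-neighbourhood `W ⊆ G` there is a
`0`-neighbourhood `V ⊆ F₁` such that `β (f x, g x) ∈ W` whenever `f ∈ C(U,F₁)` with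
`f '' K ⊆ V`, `g ∈ M` and `x ∈ K`. -/
theorem statement16
    {E F₁ F₂ G : Type*}
    [AddCommGroup E] [Module ℝ E] [TopologicalSpace E] [IsTopologicalAddGroup E]
    [ContinuousSMul ℝ E] [LocallyConvexSpace ℝ E] [T2Space E]
    [AddCommGroup F₁] [Module ℝ F₁] [TopologicalSpace F₁] [IsTopologicalAddGroup F₁]
    [ContinuousSMul ℝ F₁] [LocallyConvexSpace ℝ F₁] [T2Space F₁]
    [AddCommGroup F₂] [Module ℝ F₂] [TopologicalSpace F₂] [IsTopologicalAddGroup F₂]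
    [ContinuousSMul ℝ F₂] [LocallyConvexSpace ℝ F₂] [T2Space F₂]
    [AddCommGroup G] [Module ℝ G] [TopologicalSpace G] [IsTopologicalAddGroup G]
    [ContinuousSMul ℝ G] [LocallyConvexSpace ℝ G] [T2Space G]
    (U : Set E) (hU : IsOpen U)
    (β : F₁ × F₂ → G)
    (hlin₁ : ∀ y, IsLinearMap ℝ fun x => β (x, y))
    (hlin₂ : ∀ x, IsLinearMap ℝ fun y => β (x, y))
    (hcont₁ : ∀ y, Continuous fun x => β (x, y))
    (hcont₂ : ∀ x, Continuous fun y => β (x, y))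
    (hhypo : ∀ N : Set F₂, IsCompact N → ∀ W ∈ 𝓝 (0 : G),
      ∃ V ∈ 𝓝 (0 : F₁), ∀ x ∈ V, ∀ y ∈ N, β (x, y) ∈ W) :
    (∀ (g : C(U, F₂)) (Φ : C(U, F₁) → C(U, G)),
      (∀ (f : C(U, F₁)) (x : U), Φ f x = β (f x, g x)) → Continuous Φ) ∧
      ∀ M : Set C(U, F₂), IsCompact M → ∀ K : Set U, IsCompact K → ∀ W ∈ 𝓝 (0 : G),
        ∃ V ∈ 𝓝 (0 : F₁), ∀ f : C(U, F₁), (∀ x ∈ K, f x ∈ V) →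
          ∀ g ∈ M, ∀ x ∈ K, β (f x, g x) ∈ W := by
  constructor
  · -- separate continuity in the first argument
    intro g Φ hΦ
    rw [continuous_iff_continuousAt]
    intro f₀
    -- the "difference" map, continuous at 0
    set D : C(U, F₁) → C(U, G) := fun h => Φ (h + f₀) - Φ f₀ with hD
    have hDval : ∀ h x, D h x = β (h x, g x) := by
      intro h x
      simp only [hD, ContinuousMap.sub_apply, hΦ]
      rw [show ((h + f₀ : C(U, F₁)) : U → F₁) x = h x + f₀ x from rfl,
        (hlin₁ (g x)).1 (h x) (f₀ x)]
      abel
    have hD0 : D 0 = 0 := by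
      ext x
      simpa using (hlin₁ (g x)).map_zero.trans rfl |>.symm ▸ (hDval 0 x).trans
        (by simpa using (hlin₁ (g x)).map_zero)
    have hDcont0 : Filter.Tendsto D (𝓝 0) (𝓝 0) := by
      rw [ContinuousMap.tendsto_nhds_compactOpen]
      intro K hK O hO hmaps
      rcases Set.eq_empty_or_nonempty K with rfl | ⟨x₀, hx₀⟩
      · exact Filter.Eventually.of_forall fun _ => Set.mapsTo_empty _ _
      · have h0O : (0 : G) ∈ O := by simpa using hmaps hx₀
        have hN : IsCompact ((g : U → F₂) '' K) := hK.image (map_continuous g)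
        obtain ⟨V, hV, hVW⟩ := hhypo _ hN O (hO.mem_nhds h0O)
        have h0V : (0 : F₁) ∈ interior V := mem_interior_iff_mem_nhds.2 hV
        have hopen : IsOpen {h : C(U, F₁) | Set.MapsTo h K (interior V)} :=
          ContinuousMap.isOpen_setOf_mapsTo hK isOpen_interior
        have hmem : (0 : C(U, F₁)) ∈ {h : C(U, F₁) | Set.MapsTo h K (interior V)} :=
          fun x _ => by simpa using h0V
        filter_upwards [hopen.mem_nhds hmem] with h hh x hx
        rw [hDval h x]
        exact hVW _ (interior_subset (hh hx)) _ ⟨x, hx, rfl⟩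
    -- assemble continuity at f₀
    have h1 : Filter.Tendsto (fun f : C(U, F₁) => f - f₀) (𝓝 f₀) (𝓝 0) := by
      have := (continuous_id.sub (continuous_const (y := f₀))).tendsto f₀
      simpa [Pi.sub_def] using this
    have h2 : Filter.Tendsto (fun f : C(U, F₁) => D (f - f₀)) (𝓝 f₀) (𝓝 0) :=
      hDcont0.comp h1
    have h3 : Filter.Tendsto (fun f : C(U, F₁) => D (f - f₀) + Φ f₀) (𝓝 f₀) (𝓝 (Φ f₀)) := by
      have := h2.add (tendsto_const_nhds (x := Φ f₀))
      simpa using this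
    have hEq : (fun f : C(U, F₁) => D (f - f₀) + Φ f₀) = Φ := by
      funext f
      simp [hD, sub_add_cancel]
    rw [ContinuousAt]
    rw [← hEq]
    have : (fun f : C(U, F₁) => D (f - f₀) + Φ f₀) f₀ = Φ f₀ := by
      simp [hD, sub_add_cancel]
    rw [this]
    exact h3
  · -- hypocontinuity
    intro M hM K hK W hW
    obtain ⟨N, hN, hmemN⟩ := statement16_aux U K hK M hM
    obtain ⟨V, hV, hVW⟩ := hhypo N hN W hW
    exact ⟨V, hV, fun f hf g hg x hx => hVW _ (hf x hx) _ (hmemN g hg x hx)⟩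
end

section
/- Let E, F, G be locally convex topological vector spaces over ℝ, U ⊆ E an open subset, and β : E × F → G a bilinear map that is hypocontinuous in the first argument with respect to the set of all compact subsets of E (i.e. β is separately continuous and for each compact C ⊆ E and each 0-neighbourhood W ⊆ G there exists a 0-neighbourhood V ⊆ F with β(C × V) ⊆ W). Equip C(U,F) and C(U,G) with the compact-open topology. Then the map β_* : C(U,F) → C(U,G), β_*(f)(x) := β(x, f(x)), is a continuous linear map. -/
open Filter Topology Bornology

/-- Let `E`, `F`, `G` be locally convex spaces over `ℝ`, `U ⊆ E` open and
`β : E × F → G` a bilinear map which is hypocontinuous in the first argument with respect to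
the compact subsets of `E`.  Equip `C(U,F)` and `C(U,G)` with the compact-open topology.
Then the map `β_* : C(U,F) → C(U,G)`, `β_* f := (x ↦ β (x, f x))` (stated for any map
`Φ : C(U,F) → C(U,G)` realizing this formula), is continuous and linear. -/
theorem statement17
    {E F G : Type*}
    [AddCommGroup E] [Module ℝ E] [TopologicalSpace E] [IsTopologicalAddGroup E]
    [ContinuousSMul ℝ E] [LocallyConvexSpace ℝ E]
    [AddCommGroup F] [Module ℝ F] [TopologicalSpace F] [IsTopologicalAddGroup F]
    [ContinuousSMul ℝ F] [LocallyConvexSpace ℝ F]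
    [AddCommGroup G] [Module ℝ G] [TopologicalSpace G] [IsTopologicalAddGroup G]
    [ContinuousSMul ℝ G] [LocallyConvexSpace ℝ G]
    (U : Set E) (hU : IsOpen U)
    (β : E × F → G)
    (hlin₁ : ∀ y, IsLinearMap ℝ fun x => β (x, y))
    (hlin₂ : ∀ x, IsLinearMap ℝ fun y => β (x, y))
    (hcont₁ : ∀ y, Continuous fun x => β (x, y))
    (hcont₂ : ∀ x, Continuous fun y => β (x, y))
    (hhypo : ∀ C : Set E, IsCompact C → ∀ W ∈ 𝓝 (0 : G),
      ∃ V ∈ 𝓝 (0 : F), ∀ x ∈ C, ∀ y ∈ V, β (x, y) ∈ W)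
    (Φ : C(U, F) → C(U, G))
    (hΦ : ∀ (f : C(U, F)) (x : U), Φ f x = β ((x : E), f x)) :
    Continuous Φ ∧ IsLinearMap ℝ Φ := by
  have hadd : ∀ f g : C(U, F), Φ (f + g) = Φ f + Φ g := by
    intro f g
    ext x
    simp only [ContinuousMap.add_apply, hΦ]
    exact (hlin₂ (x : E)).map_add (f x) (g x)
  have hsmul : ∀ (c : ℝ) (f : C(U, F)), Φ (c • f) = c • Φ f := by
    intro c f
    ext x
    simp only [ContinuousMap.smul_apply, hΦ]
    exact (hlin₂ (x : E)).map_smul c (f x)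
  have hlin : IsLinearMap ℝ Φ := ⟨hadd, hsmul⟩
  refine ⟨?_, hlin⟩
  have hzero : Φ 0 = 0 := by
    have := hsmul 0 0
    simpa using this
  -- bundle as an `AddMonoidHom`
  let Φ' : C(U, F) →+ C(U, G) :=
    { toFun := Φ
      map_zero' := hzero
      map_add' := hadd }
  have h0 : ContinuousAt Φ' 0 := by
    rw [ContinuousAt, map_zero, ContinuousMap.tendsto_nhds_compactOpen]
    intro K hK W hW hmap
    by_cases hKe : K = ∅
    · subst hKe
      exact Eventually.of_forall fun f x hx => absurd hx (Set.notMem_empty x)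
    · obtain ⟨x₀, hx₀⟩ := Set.nonempty_iff_ne_empty.2 hKe
      have h0W : (0 : G) ∈ W := by
        have := hmap hx₀
        simpa using this
      rcases hhypo (Subtype.val '' K) (hK.image continuous_subtype_val) W
        (hW.mem_nhds h0W) with ⟨V, hV, hVW⟩
      have h0V : (0 : F) ∈ interior V := mem_interior_iff_mem_nhds.2 hV
      have hopen : IsOpen {f : C(U, F) | Set.MapsTo f K (interior V)} :=
        ContinuousMap.isOpen_setOf_mapsTo hK isOpen_interior
      have hmem : (0 : C(U, F)) ∈ {f : C(U, F) | Set.MapsTo f K (interior V)} :=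
        fun x _ => h0V
      filter_upwards [hopen.mem_nhds hmem] with f hf x hx
      show Φ f x ∈ W
      rw [hΦ]
      exact hVW _ ⟨x, hx, rfl⟩ _ (interior_subset (hf hx))
  exact continuous_of_continuousAt_zero Φ' h0
end

section
/- Let E, F be locally convex topological vector spaces over ℝ, let M be a compact subset of L(E,F)_c (the space of continuous linear operators with the topology of uniform convergence on compact subsets of E), and let N ⊆ E be compact. Then the set {A(x) : A ∈ M, x ∈ N}, the image of M × N under the evaluation map (A,x) ↦ A(x), is a compact subset of F. -/
open Filter Topology Bornology

/-- Let `E`, `F` be locally convex spaces over `ℝ`, `M` a compact subset of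
`L(E,F)_c` (continuous linear operators with the topology of uniform convergence on compact
subsets of `E`) and `N ⊆ E` compact.  Then `{A x : A ∈ M, x ∈ N}`, the image of `M × N` under
the evaluation map, is a compact subset of `F`. -/
theorem statement19
    {E F : Type*}
    [AddCommGroup E] [Module ℝ E] [TopologicalSpace E] [IsTopologicalAddGroup E]
    [ContinuousSMul ℝ E] [LocallyConvexSpace ℝ E]
    [AddCommGroup F] [Module ℝ F] [TopologicalSpace F] [IsTopologicalAddGroup F]
    [ContinuousSMul ℝ F] [LocallyConvexSpace ℝ F]
    (M : Set (UniformConvergenceCLM (RingHom.id ℝ) F {K : Set E | IsCompact K}))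
    (hM : IsCompact M)
    (N : Set E) (hN : IsCompact N) :
    IsCompact (Set.image2
      (fun (A : UniformConvergenceCLM (RingHom.id ℝ) F {K : Set E | IsCompact K}) (x : E) => A x)
      M N) := by
  letI : UniformSpace F := IsTopologicalAddGroup.rightUniformSpace F
  haveI : IsUniformAddGroup F := isUniformAddGroup_of_addCommGroup
  rw [← Set.image_uncurry_prod]
  apply (hM.prod hN).image_of_continuousOn
  rintro ⟨A₀, x₀⟩ ⟨hA₀, hx₀⟩
  have hunif : TendstoUniformlyOn
      (fun (p : UniformConvergenceCLM (RingHom.id ℝ) F {K : Set E | IsCompact K} × E) (a : E)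
        => p.1 a) A₀ (𝓝[M ×ˢ N] (A₀, x₀)) N := by
    have h1 : Filter.Tendsto (fun p : UniformConvergenceCLM (RingHom.id ℝ) F
        {K : Set E | IsCompact K} × E => p.1) (𝓝[M ×ˢ N] (A₀, x₀)) (𝓝 A₀) :=
      (continuous_fst.continuousAt).mono_left nhdsWithin_le_nhds
    exact (UniformConvergenceCLM.tendsto_iff_tendstoUniformlyOn (RingHom.id ℝ) F {K : Set E | IsCompact K}).1 h1 N hN
  have hx : Filter.Tendsto (fun p : UniformConvergenceCLM (RingHom.id ℝ) F
      {K : Set E | IsCompact K} × E => p.2) (𝓝[M ×ˢ N] (A₀, x₀)) (𝓝[N] x₀) := by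
    apply tendsto_nhdsWithin_of_tendsto_nhds_of_eventually_within
    · exact continuous_snd.continuousAt.mono_left nhdsWithin_le_nhds
    · filter_upwards [self_mem_nhdsWithin] with p hp using hp.2
  exact hunif.tendsto_comp (A₀.continuous.continuousAt.continuousWithinAt) hx
end
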